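/- Let f be holomorphic on the open unit disc and continuous on the closed disc with |f| = 1 on an open arc J of the unit circle, f nonconstant. Then the set f⁻¹(ξ) ∩ J is discrete (has no cluster point in J) for every ξ on the unit circle. -/

import Mathlib

/-!
Near a point `z₀` of the arc, the chart `ζ ↦ z₀ e^{iζ}` maps a small half-disc of the upper
half-plane into the unit disc and its real diameter into the arc. Pulled back by the chart, `f`
becomes unimodular on the real axis, so the Schwarz reflection `ζ ↦ 1 / conj (f (conj ζ))`
continues it across the axis; the continuation is holomorphic by Morera's theorem, since the
integral over a rectangle crossing the axis splits into two rectangles whose interiors avoid it.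
If the fibre over `ξ` accumulated at `z₀`, the identity theorem would make the continuation,
hence `f` on an open subset of the disc, hence `f` itself, constantly `ξ`.
-/

open Complex Set Metric Filter Topology intervalIntegral
open scoped Interval ComplexConjugate

namespace Complex

variable {E : Type*} [NormedAddCommGroup E] {f : ℂ → E} {U : Set ℂ}

theorem rectangle_subset_rectangle {z w z' w' : ℂ} (hz : z' ∈ Rectangle z w)
    (hw : w' ∈ Rectangle z w) : Rectangle z' w' ⊆ Rectangle z w :=
  inter_subset_inter (preimage_mono (uIcc_subset_uIcc hz.1 hw.1))
    (preimage_mono (uIcc_subset_uIcc hz.2 hw.2))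

theorem intervalIntegrable_of_continuousOn_rectangle {z w : ℂ}
    (hc : ContinuousOn f (Rectangle z w)) {x a b : ℝ} (hx : x ∈ [[z.re, w.re]])
    (hab : [[a, b]] ⊆ [[z.im, w.im]]) :
    IntervalIntegrable (fun y : ℝ => f (x + y * I)) MeasureTheory.volume a b :=
  ContinuousOn.intervalIntegrable <| hc.comp (by fun_prop) fun y hy => by
    simpa [Rectangle, mem_reProdIm] using ⟨hx, hab hy⟩

variable [NormedSpace ℂ E]

theorem wedgeIntegral_add_wedgeIntegral_eq_zero_of_im_ne_zero {z w : ℂ}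
    (hR : Rectangle z w ⊆ U) (hc : ContinuousOn f U)
    (hd : ∀ ζ ∈ U, ζ.im ≠ 0 → DifferentiableAt ℂ f ζ)
    (h0 : (0 : ℝ) ∉ Ioo (min z.im w.im) (max z.im w.im)) :
    wedgeIntegral z w f + wedgeIntegral w z f = 0 := by
  rw [wedgeIntegral_add_wedgeIntegral_eq]
  refine integral_boundary_rect_eq_zero_of_continuousOn_of_differentiableOn f z w
    (hc.mono hR) fun ζ hζ => ?_
  have hζR : ζ ∈ Rectangle z w := ⟨Ioo_subset_Icc_self hζ.1, Ioo_subset_Icc_self hζ.2⟩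
  exact (hd ζ (hR hζR) fun him => h0 (him ▸ hζ.2)).differentiableWithinAt

theorem wedgeIntegral_add_wedgeIntegral_eq_add {z w : ℂ} (hc : ContinuousOn f (Rectangle z w))
    {c : ℝ} (hcim : c ∈ [[z.im, w.im]]) :
    wedgeIntegral z w f + wedgeIntegral w z f =
      (wedgeIntegral z ⟨w.re, c⟩ f + wedgeIntegral ⟨w.re, c⟩ z f) +
        (wedgeIntegral ⟨z.re, c⟩ w f + wedgeIntegral w ⟨z.re, c⟩ f) := by
  simp only [wedgeIntegral_add_wedgeIntegral_eq]
  have hlow : [[z.im, c]] ⊆ [[z.im, w.im]] := uIcc_subset_uIcc left_mem_uIcc hcim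
  have hupp : [[c, w.im]] ⊆ [[z.im, w.im]] := uIcc_subset_uIcc hcim right_mem_uIcc
  rw [← integral_add_adjacent_intervals
      (intervalIntegrable_of_continuousOn_rectangle hc right_mem_uIcc hlow)
      (intervalIntegrable_of_continuousOn_rectangle hc right_mem_uIcc hupp),
    ← integral_add_adjacent_intervals
      (intervalIntegrable_of_continuousOn_rectangle hc left_mem_uIcc hlow)
      (intervalIntegrable_of_continuousOn_rectangle hc left_mem_uIcc hupp)]
  simp only [smul_add]
  abel

theorem isConservativeOn_of_differentiableAt_im_ne_zero (hc : ContinuousOn f U)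
    (hd : ∀ ζ ∈ U, ζ.im ≠ 0 → DifferentiableAt ℂ f ζ) : IsConservativeOn f U := by
  intro z w hR
  rw [eq_neg_iff_add_eq_zero]
  by_cases h0 : (0 : ℝ) ∈ Ioo (min z.im w.im) (max z.im w.im)
  · have h0' : (0 : ℝ) ∈ [[z.im, w.im]] := Ioo_subset_Icc_self h0
    have hlow : Rectangle z ⟨w.re, 0⟩ ⊆ Rectangle z w :=
      rectangle_subset_rectangle ⟨left_mem_uIcc, left_mem_uIcc⟩ ⟨right_mem_uIcc, h0'⟩
    have hupp : Rectangle ⟨z.re, 0⟩ w ⊆ Rectangle z w :=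
      rectangle_subset_rectangle ⟨left_mem_uIcc, h0'⟩ ⟨right_mem_uIcc, right_mem_uIcc⟩
    rw [wedgeIntegral_add_wedgeIntegral_eq_add (hc.mono hR) h0',
      wedgeIntegral_add_wedgeIntegral_eq_zero_of_im_ne_zero (hlow.trans hR) hc hd (by grind),
      wedgeIntegral_add_wedgeIntegral_eq_zero_of_im_ne_zero (hupp.trans hR) hc hd (by grind),
      add_zero]
  · exact wedgeIntegral_add_wedgeIntegral_eq_zero_of_im_ne_zero hR hc hd h0

theorem differentiableOn_of_differentiableAt_im_ne_zero [CompleteSpace E] (hU : IsOpen U)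
    (hc : ContinuousOn f U) (hd : ∀ ζ ∈ U, ζ.im ≠ 0 → DifferentiableAt ℂ f ζ) :
    DifferentiableOn ℂ f U :=
  (isConservativeOn_and_continuousOn_iff_isDifferentiableOn hU).1
    ⟨isConservativeOn_of_differentiableAt_im_ne_zero hc hd, hc⟩

end Complex

noncomputable def schwarzReflection (g : ℂ → ℂ) (ζ : ℂ) : ℂ :=
  if 0 ≤ ζ.im then g ζ else (conj (g (conj ζ)))⁻¹

section SchwarzReflection

variable {g : ℂ → ℂ} {U : Set ℂ}

theorem schwarzReflection_of_im_nonneg {ζ : ℂ} (h : 0 ≤ ζ.im) : schwarzReflection g ζ = g ζ :=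
  if_pos h

theorem schwarzReflection_of_im_neg {ζ : ℂ} (h : ζ.im < 0) :
    schwarzReflection g ζ = (conj (g (conj ζ)))⁻¹ :=
  if_neg h.not_ge

theorem inv_conj_of_norm_eq_one {u : ℂ} (hu : ‖u‖ = 1) : (conj u)⁻¹ = u := by
  rw [inv_eq_conj (by rwa [norm_conj]), conj_conj]

theorem continuousOn_schwarzReflection (hUc : ∀ ζ ∈ U, conj ζ ∈ U)
    (hc : ContinuousOn g (U ∩ {ζ | 0 ≤ ζ.im})) (hne : ∀ ζ ∈ U, 0 ≤ ζ.im → g ζ ≠ 0)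
    (hnorm : ∀ ζ ∈ U, ζ.im = 0 → ‖g ζ‖ = 1) :
    ContinuousOn (schwarzReflection g) U := by
  refine ContinuousOn.if ?_ ?_ ?_
  · rintro ζ ⟨hζ, hζim⟩
    rw [frontier_setOfPred_le_im, mem_ofPred_eq] at hζim
    rw [conj_eq_iff_im.2 hζim, inv_conj_of_norm_eq_one (hnorm ζ hζ hζim)]
  · rwa [(isClosed_le continuous_const continuous_im).closure_eq]
  · simp only [not_le]
    rw [closure_setOfPred_im_lt]
    have hmaps : MapsTo conj (U ∩ {ζ | ζ.im ≤ 0}) (U ∩ {ζ | 0 ≤ ζ.im}) :=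
      fun ζ hζ => ⟨hUc ζ hζ.1, by simpa using hζ.2⟩
    refine ContinuousOn.inv₀ (continuous_conj.comp_continuousOn
      (hc.comp continuous_conj.continuousOn hmaps)) fun ζ hζ => ?_
    simpa using hne _ (hmaps hζ).1 (hmaps hζ).2

theorem differentiableOn_schwarzReflection (hU : IsOpen U) (hUc : ∀ ζ ∈ U, conj ζ ∈ U)
    (hc : ContinuousOn g (U ∩ {ζ | 0 ≤ ζ.im})) (hd : DifferentiableOn ℂ g (U ∩ {ζ | 0 < ζ.im}))
    (hne : ∀ ζ ∈ U, 0 ≤ ζ.im → g ζ ≠ 0) (hnorm : ∀ ζ ∈ U, ζ.im = 0 → ‖g ζ‖ = 1) :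
    DifferentiableOn ℂ (schwarzReflection g) U := by
  have hUpos : IsOpen (U ∩ {ζ | 0 < ζ.im}) := hU.inter (isOpen_lt continuous_const continuous_im)
  refine differentiableOn_of_differentiableAt_im_ne_zero hU
    (continuousOn_schwarzReflection hUc hc hne hnorm) fun ζ hζ him => ?_
  rcases him.lt_or_gt with hneg | hpos
  · have hζ' : conj ζ ∈ U ∩ {ζ | 0 < ζ.im} := ⟨hUc ζ hζ, by simpa using hneg⟩
    have hg : DifferentiableAt ℂ (conj ∘ g ∘ conj) ζ := by
      simpa using ((hd _ hζ').differentiableAt (hUpos.mem_nhds hζ')).conj_conj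
    refine (hg.inv (by simpa using hne _ hζ'.1 hζ'.2.le)).congr_of_eventuallyEq ?_
    filter_upwards [(isOpen_lt continuous_im continuous_const).mem_nhds hneg] with η hη
    simp [schwarzReflection_of_im_neg (show η.im < 0 from hη)]
  · refine ((hd ζ ⟨hζ, hpos⟩).differentiableAt (hUpos.mem_nhds ⟨hζ, hpos⟩)).congr_of_eventuallyEq ?_
    filter_upwards [(isOpen_lt continuous_const continuous_im).mem_nhds hpos] with η hη
    exact schwarzReflection_of_im_nonneg (show 0 < η.im from hη).le

end SchwarzReflection

noncomputable def circleChart (z₀ ζ : ℂ) : ℂ := z₀ * exp (ζ * I)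

noncomputable def circleChartInv (z₀ w : ℂ) : ℂ := -I * log (w / z₀)

section CircleChart

variable {z₀ : ℂ}

theorem continuous_circleChart : Continuous (circleChart z₀) := by
  unfold circleChart; fun_prop

theorem differentiable_circleChart : Differentiable ℂ (circleChart z₀) := by
  unfold circleChart; fun_prop

theorem circleChart_zero : circleChart z₀ 0 = z₀ := by simp [circleChart]

theorem norm_circleChart (hz₀ : ‖z₀‖ = 1) (ζ : ℂ) :
    ‖circleChart z₀ ζ‖ = Real.exp (-ζ.im) := by
  simp [circleChart, norm_exp, hz₀]

theorem circleChart_circleChartInv (hz₀ : z₀ ≠ 0) {w : ℂ} (hw : w ≠ 0) :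
    circleChart z₀ (circleChartInv z₀ w) = w := by
  have : -I * log (w / z₀) * I = log (w / z₀) := by ring_nf; simp
  rw [circleChart, circleChartInv, this, exp_log (div_ne_zero hw hz₀), mul_div_cancel₀ _ hz₀]

theorem circleChartInv_circleChart (hz₀ : z₀ ≠ 0) {ζ : ℂ} (h₁ : -Real.pi < ζ.re)
    (h₂ : ζ.re ≤ Real.pi) : circleChartInv z₀ (circleChart z₀ ζ) = ζ := by
  rw [circleChartInv, circleChart, mul_div_cancel_left₀ _ hz₀, log_exp (by simpa) (by simpa)]
  ring_nf; simp

theorem im_circleChartInv (hz₀ : ‖z₀‖ = 1) (w : ℂ) :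
    (circleChartInv z₀ w).im = -Real.log ‖w‖ := by
  simp [circleChartInv, log_re, hz₀]

theorem continuousAt_circleChartInv {w : ℂ} (hw : w / z₀ ∈ slitPlane) :
    ContinuousAt (circleChartInv z₀) w := by
  unfold circleChartInv
  exact continuousAt_const.mul ((continuousAt_clog hw).comp (f := (· / z₀)) (by fun_prop))

theorem tendsto_circleChartInv_nhdsNE (hz₀ : z₀ ≠ 0) :
    Tendsto (circleChartInv z₀) (𝓝[≠] z₀) (𝓝[≠] 0) := by
  have h0 : circleChartInv z₀ z₀ = 0 := by rw [circleChartInv, div_self hz₀, log_one, mul_zero]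
  have hcont : ContinuousAt (circleChartInv z₀) z₀ :=
    continuousAt_circleChartInv (by rw [div_self hz₀]; exact one_mem_slitPlane)
  refine tendsto_nhdsWithin_of_tendsto_nhds_of_eventually_within _
    (h0 ▸ hcont.tendsto.mono_left nhdsWithin_le_nhds) ?_
  filter_upwards [self_mem_nhdsWithin, nhdsWithin_le_nhds (eventually_ne_nhds hz₀)]
    with w hwz₀ hw0 hw
  apply hwz₀
  rw [← circleChart_circleChartInv hz₀ hw0, show circleChartInv z₀ w = 0 from hw,
    circleChart_zero, mem_singleton_iff]

theorem schwarzReflection_comp_circleChart_circleChartInv {f : ℂ → ℂ} (hz₀ : z₀ ≠ 0) {w : ℂ}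
    (hw : w ≠ 0) (him : 0 ≤ (circleChartInv z₀ w).im) :
    schwarzReflection (f ∘ circleChart z₀) (circleChartInv z₀ w) = f w := by
  rw [schwarzReflection_of_im_nonneg him, Function.comp_apply, circleChart_circleChartInv hz₀ hw]

end CircleChart

theorem exists_isOpen_inter_subsingleton_of_not_accPt {X : Type*} [TopologicalSpace X] {x : X}
    {s : Set X} (h : ¬AccPt x (𝓟 s)) : ∃ V, IsOpen V ∧ x ∈ V ∧ (s ∩ V).Subsingleton := by
  rw [accPt_iff_nhds] at h
  push Not at h
  obtain ⟨U, hU, hUs⟩ := h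
  obtain ⟨V, hVU, hVo, hxV⟩ := mem_nhds_iff.1 hU
  exact ⟨V, hVo, hxV, subsingleton_singleton.anti fun y hy => hUs y ⟨hVU hy.2, hy.1⟩⟩

section UnitDisc

variable {f : ℂ → ℂ} {z₀ : ℂ} {V : Set ℂ}

theorem exists_differentiableOn_schwarzReflection_comp_circleChart
    (hfc : ContinuousOn f (closedBall 0 1)) (hfd : DifferentiableOn ℂ f (ball 0 1))
    (hz₀ : ‖z₀‖ = 1) (hV : V ∈ 𝓝 z₀) (hmod : ∀ w ∈ sphere (0 : ℂ) 1 ∩ V, ‖f w‖ = 1) :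
    ∃ r > 0, DifferentiableOn ℂ (schwarzReflection (f ∘ circleChart z₀)) (ball 0 r) := by
  have hfz₀ : f z₀ ≠ 0 := by
    rw [← norm_ne_zero_iff, hmod z₀ ⟨by simpa using hz₀, mem_of_mem_nhds hV⟩]
    exact one_ne_zero
  have hf0 : ∀ᶠ w in 𝓝 z₀, w ∈ closedBall (0 : ℂ) 1 → f w ≠ 0 :=
    eventually_nhdsWithin_iff.1 ((hfc z₀ (by simp [hz₀])).eventually_ne hfz₀)
  have hN : V ∩ {w | w ∈ closedBall (0 : ℂ) 1 → f w ≠ 0} ∈ 𝓝 (circleChart z₀ 0) := by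
    rw [circleChart_zero]
    exact inter_mem hV hf0
  obtain ⟨r, hr, hball⟩ :=
    Metric.mem_nhds_iff.1 (continuous_circleChart.continuousAt.preimage_mem_nhds hN)
  have hclosed : ∀ ζ : ℂ, 0 ≤ ζ.im → circleChart z₀ ζ ∈ closedBall 0 1 := fun ζ hζ => by
    simpa [norm_circleChart hz₀] using hζ
  have hopen : ∀ ζ : ℂ, 0 < ζ.im → circleChart z₀ ζ ∈ ball 0 1 := fun ζ hζ => by
    simpa [norm_circleChart hz₀] using hζ
  have hsphere : ∀ ζ : ℂ, ζ.im = 0 → circleChart z₀ ζ ∈ sphere 0 1 := fun ζ hζ => by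
    simp [norm_circleChart hz₀, hζ]
  refine ⟨r, hr, differentiableOn_schwarzReflection isOpen_ball (fun ζ hζ => by simpa using hζ)
    (hfc.comp continuous_circleChart.continuousOn fun ζ hζ => hclosed ζ hζ.2)
    (hfd.comp differentiable_circleChart.differentiableOn fun ζ hζ => hopen ζ hζ.2)
    (fun ζ hζ him => (hball hζ).2 (hclosed ζ him))
    fun ζ hζ him => hmod _ ⟨hsphere ζ him, (hball hζ).1⟩⟩

theorem eqOn_const_of_accPt_fiber {ξ : ℂ}
    (hfc : ContinuousOn f (closedBall 0 1)) (hfd : DifferentiableOn ℂ f (ball 0 1))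
    (hz₀ : ‖z₀‖ = 1) (hV : V ∈ 𝓝 z₀) (hmod : ∀ w ∈ sphere (0 : ℂ) 1 ∩ V, ‖f w‖ = 1)
    (hacc : AccPt z₀ (𝓟 (f ⁻¹' {ξ} ∩ (sphere 0 1 ∩ V)))) :
    EqOn f (fun _ => ξ) (ball 0 1) := by
  obtain ⟨r, hr, hG⟩ :=
    exists_differentiableOn_schwarzReflection_comp_circleChart hfc hfd hz₀ hV hmod
  set G := schwarzReflection (f ∘ circleChart z₀)
  have hz₀ne : z₀ ≠ 0 := norm_ne_zero_iff.1 (by simp [hz₀])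
  have hGfreq : ∃ᶠ ζ in 𝓝[≠] 0, G ζ = ξ :=
    (tendsto_circleChartInv_nhdsNE hz₀ne).frequently <|
      (accPt_iff_frequently_nhdsNE.1 hacc).mono fun w ⟨hfw, hw1, _⟩ => by
        have hw : ‖w‖ = 1 := by simpa using hw1
        have him : 0 ≤ (circleChartInv z₀ w).im := by simp [im_circleChartInv hz₀, hw]
        have hw0 : w ≠ 0 := norm_ne_zero_iff.1 (by simp [hw])
        exact (schwarzReflection_comp_circleChart_circleChartInv hz₀ne hw0 him).trans hfw
  have hGξ : EqOn G (fun _ => ξ) (ball 0 r) :=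
    (hG.analyticOnNhd isOpen_ball).eqOn_of_preconnected_of_frequently_eq analyticOnNhd_const
      (convex_ball 0 r).isPreconnected (mem_ball_self hr) hGfreq
  -- `G = ξ` near `ζ₁` carries over to `f = ξ` near `circleChart z₀ ζ₁`, a point inside the disc.
  set ζ₁ : ℂ := (r / 2 : ℝ) * I
  have hw₁ : circleChart z₀ ζ₁ = z₀ * Real.exp (-(r / 2)) := by
    simp [circleChart, ζ₁, mul_assoc]
  have hw₁ne : circleChart z₀ ζ₁ ≠ 0 := by
    rw [hw₁]
    exact mul_ne_zero hz₀ne (ofReal_ne_zero.2 (Real.exp_pos _).ne')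
  have hw₁mem : circleChart z₀ ζ₁ ∈ ball 0 1 := by
    simpa [norm_circleChart hz₀, ζ₁] using hr
  have hfw₁ : f =ᶠ[𝓝 (circleChart z₀ ζ₁)] fun _ => ξ := by
    have hL : ContinuousAt (circleChartInv z₀) (circleChart z₀ ζ₁) := by
      refine continuousAt_circleChartInv ?_
      rw [hw₁, mul_div_cancel_left₀ _ hz₀ne]
      exact ofReal_mem_slitPlane.2 (Real.exp_pos _)
    have hLζ₁ : circleChartInv z₀ (circleChart z₀ ζ₁) = ζ₁ :=
      circleChartInv_circleChart hz₀ne (by simp [ζ₁, Real.pi_pos]) (by simp [ζ₁, Real.pi_pos.le])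
    have hU : ball 0 r ∩ {ζ | 0 < ζ.im} ∈ 𝓝 ζ₁ :=
      (isOpen_ball.inter (isOpen_lt continuous_const continuous_im)).mem_nhds
        ⟨by simpa [ζ₁, abs_of_pos hr] using hr, by simpa [ζ₁] using hr⟩
    filter_upwards [hL.preimage_mem_nhds (hLζ₁ ▸ hU), eventually_ne_nhds hw₁ne]
      with w hw hw0
    have him : 0 < (circleChartInv z₀ w).im := hw.2
    exact (schwarzReflection_comp_circleChart_circleChartInv hz₀ne hw0 him.le).symm.trans
      (hGξ hw.1)
  exact (hfd.analyticOnNhd isOpen_ball).eqOn_of_preconnected_of_eventuallyEq analyticOnNhd_const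
    (convex_ball 0 1).isPreconnected hw₁mem hfw₁

end UnitDisc

theorem fiber_discrete_in_arc_general (f : ℂ → ℂ) (J : Set ℂ)
    (hfc : ContinuousOn f (Metric.closedBall (0:ℂ) 1))
    (hfd : DifferentiableOn ℂ f (Metric.ball (0:ℂ) 1))
    (hfnc : ¬ ∃ c : ℂ, ∀ z ∈ Metric.ball (0:ℂ) 1, f z = c)
    (hJopen : ∃ V : Set ℂ, IsOpen V ∧ J = Metric.sphere (0:ℂ) 1 ∩ V)
    (hmod : ∀ ζ ∈ J, ‖f ζ‖ = 1) :
    ∀ ξ ∈ Metric.sphere (0:ℂ) 1, ∀ z ∈ J,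
      ∃ V : Set ℂ, IsOpen V ∧ z ∈ V ∧
        Set.Subsingleton (f ⁻¹' {ξ} ∩ J ∩ V) := by
  intro ξ _ z hz
  obtain ⟨V, hVo, rfl⟩ := hJopen
  refine exists_isOpen_inter_subsingleton_of_not_accPt fun hacc => hfnc ⟨ξ, ?_⟩
  exact eqOn_const_of_accPt_fiber hfc hfd (by simpa using hz.1) (hVo.mem_nhds hz.2) hmod hacc

theorem fiber_discrete_in_arc (f : ℂ → ℂ) (J : Set ℂ)
    (hfc : ContinuousOn f (Metric.closedBall (0:ℂ) 1))
    (hfd : DifferentiableOn ℂ f (Metric.ball (0:ℂ) 1))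
    (hfnc : ¬ ∃ c : ℂ, ∀ z ∈ Metric.ball (0:ℂ) 1, f z = c)
    (hJs : J ⊆ Metric.sphere (0:ℂ) 1) (hJconn : IsConnected J)
    (hJopen : ∃ V : Set ℂ, IsOpen V ∧ J = Metric.sphere (0:ℂ) 1 ∩ V)
    (hmod : ∀ ζ ∈ J, ‖f ζ‖ = 1) :
    ∀ ξ ∈ Metric.sphere (0:ℂ) 1, ∀ z ∈ J,
      ∃ V : Set ℂ, IsOpen V ∧ z ∈ V ∧
        Set.Subsingleton (f ⁻¹' {ξ} ∩ J ∩ V) :=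
  fiber_discrete_in_arc_general f J hfc hfd hfnc hJopen hmod
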